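/- arXiv:2211.02122 — 4 statements merged into one kernel-verified Lean document; each statement's English description precedes it below -/
import Mathlib

section
/- Let R be a commutative ring containing ℚ, δ a derivation of R, and I a δ-invariant ideal of R (i.e., δ(I) ⊆ I). Then the radical of I is also δ-invariant. -/
private lemma nat_cancel_mem {R : Type*} [CommRing R] [Algebra ℚ R] (I : Ideal R)
    {m : ℕ} (hm : m ≠ 0) {t : R} (h : (m : R) * t ∈ I) : t ∈ I := by
  have key : algebraMap ℚ R ((m : ℚ)⁻¹) * ((m : R) * t) = t := by
    rw [← mul_assoc]
    have : algebraMap ℚ R ((m : ℚ)⁻¹) * (m : R) = 1 := by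
      rw [← map_natCast (algebraMap ℚ R) m, ← map_mul]
      rw [inv_mul_cancel₀ (by exact_mod_cast hm)]
      simp
    rw [this, one_mul]
  rw [← key]
  exact I.mul_mem_left _ h

theorem stmt_0 (R : Type*) [CommRing R] [Algebra ℚ R] (δ : Derivation ℚ R R)
    (I : Ideal R) (hI : ∀ x ∈ I, δ x ∈ I) :
    ∀ x ∈ I.radical, δ x ∈ I.radical := by
  rintro x ⟨n, hxn⟩
  have key : ∀ k, x ^ (n - k) * δ x ^ (2 * k) ∈ I := by
    intro k
    induction k with
    | zero => simpa using hxn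
    | succ k ih =>
      by_cases hk : n ≤ k
      · have h1 : n - (k + 1) = 0 := by omega
        have h0 : n - k = 0 := by omega
        rw [h0, pow_zero, one_mul] at ih
        rw [h1, pow_zero, one_mul, show 2 * (k + 1) = 2 * k + 2 by ring, pow_add]
        exact I.mul_mem_right _ ih
      · push_neg at hk
        obtain ⟨p, hp⟩ : ∃ p, n - k = p + 1 := ⟨n - k - 1, by omega⟩
        have hp1 : n - (k + 1) = p := by omega
        rw [hp] at ih
        have hδ : δ (x ^ (p + 1) * δ x ^ (2 * k)) ∈ I := hI _ ih
        rw [hp1, show 2 * (k + 1) = 2 * k + 2 by ring]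
        rcases Nat.eq_zero_or_pos k with rfl | hk0
        · -- k = 0
          simp only [Nat.mul_zero, pow_zero, mul_one] at ih hδ ⊢
          apply nat_cancel_mem I (Nat.succ_ne_zero p)
          have e : ((p + 1 : ℕ) : R) * (x ^ p * δ x ^ 2) = δ x * δ (x ^ (p + 1)) := by
            rw [Derivation.leibniz_pow]
            simp only [smul_eq_mul, nsmul_eq_mul, Nat.add_sub_cancel]
            push_cast
            ring
          rw [e]
          exact I.mul_mem_left _ hδ
        · obtain ⟨q, hq⟩ : ∃ q, 2 * k = q + 1 := ⟨2 * k - 1, by omega⟩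
          rw [hq] at ih hδ ⊢
          apply nat_cancel_mem I (Nat.succ_ne_zero p)
          have e : ((p + 1 : ℕ) : R) * (x ^ p * δ x ^ (q + 1 + 2)) =
              δ x * δ (x ^ (p + 1) * δ x ^ (q + 1)) -
                ((q + 1 : ℕ) : R) * δ (δ x) * (x ^ (p + 1) * δ x ^ (q + 1)) := by
            rw [Derivation.leibniz, Derivation.leibniz_pow, Derivation.leibniz_pow]
            simp only [smul_eq_mul, nsmul_eq_mul, Nat.add_sub_cancel]
            push_cast
            ring
          rw [e]
          exact I.sub_mem (I.mul_mem_left _ hδ) (I.mul_mem_left _ ih)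
  have := key n
  simp only [Nat.sub_self, pow_zero, one_mul] at this
  exact ⟨2 * n, this⟩
end

section
/- Let k be a field of characteristic zero, R a commutative k-algebra, and δ a k-linear derivation of R. If x ∈ R satisfies xⁿ = 0 for some n ≥ 1, then δ(x) is nilpotent, i.e. δ(x) lies in the nilradical of R. -/
theorem stmt_5 (k R : Type*) [Field k] [CharZero k] [CommRing R] [Algebra k R]
    (δ : Derivation k R R) (x : R) (n : ℕ) (hn : 1 ≤ n) (hx : x ^ n = 0) :
    IsNilpotent (δ x) := by
  letI : Algebra ℚ R := RingHom.toAlgebra ((algebraMap k R).comp (algebraMap ℚ k))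
  have hcancel : ∀ (m : ℕ) (r : R), m ≠ 0 → (m : R) * r = 0 → r = 0 := by
    intro m r hm h
    have hu : IsUnit (algebraMap ℚ R (m : ℚ)) :=
      (isUnit_iff_ne_zero.mpr (by exact_mod_cast hm)).map _
    rw [map_natCast] at hu
    exact (hu.mul_right_eq_zero).mp h
  have aux : ∀ i j : ℕ, x ^ (i + 1) * δ x ^ j = 0 → x ^ i * δ x ^ (j + 2) = 0 := by
    intro i j h
    have h1 : δ (x ^ (i + 1) * δ x ^ j) = 0 := by rw [h, map_zero]
    rw [Derivation.leibniz, Derivation.leibniz_pow, Derivation.leibniz_pow] at h1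
    -- h1 : x^(i+1) • (j • δx^(j-1) • δ(δx)) + δx^j • ((i+1) • x^i • δx) = 0
    have h2 := congrArg (· * δ x) h1
    simp only [smul_eq_mul, add_mul, zero_mul, nsmul_eq_mul] at h2
    have hA : x ^ (i + 1) * ((j : R) * (δ x ^ (j - 1) * δ (δ x))) * δ x = 0 := by
      rcases Nat.eq_zero_or_pos j with hj | hj
      · simp [hj]
      · have : δ x ^ (j - 1) * δ x = δ x ^ j := by
          rw [← pow_succ, Nat.sub_add_cancel hj]
        calc x ^ (i + 1) * ((j : R) * (δ x ^ (j - 1) * δ (δ x))) * δ x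
            = (j : R) * δ (δ x) * (x ^ (i + 1) * (δ x ^ (j - 1) * δ x)) := by ring
          _ = 0 := by rw [this, h, mul_zero]
    rw [hA, zero_add] at h2
    push_cast [Nat.add_sub_cancel] at h2
    have h3 : ((i + 1 : ℕ) : R) * (x ^ i * δ x ^ (j + 2)) = 0 := by
      push_cast
      calc ((i : R) + 1) * (x ^ i * δ x ^ (j + 2))
          = δ x ^ j * (((i : R) + 1) * (x ^ i * δ x)) * δ x := by ring
        _ = 0 := h2
    exact hcancel (i + 1) _ (Nat.succ_ne_zero i) h3
  have key : ∀ m : ℕ, m ≤ n → x ^ (n - m) * δ x ^ (2 * m) = 0 := by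
    intro m
    induction m with
    | zero => intro _; simpa using hx
    | succ m ih =>
      intro hm
      have h := ih (Nat.le_of_succ_le hm)
      have heq : n - m = (n - (m + 1)) + 1 := by omega
      rw [heq] at h
      rw [show 2 * (m + 1) = 2 * m + 2 by ring]
      exact aux (n - (m + 1)) (2 * m) h
  have := key n le_rfl
  simp only [Nat.sub_self, pow_zero, one_mul] at this
  exact ⟨2 * n, this⟩
end

section
/- Let R be an ℕ-graded commutative ring generated in degree one over R₀, with Krull dimension at least 2, and let f ∈ R₁ be nonzero. Then there exists g ∈ R₁ that does not lie in the radical of the ideal fR. -/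
/-!
Suppose every element of `R₁` lies in `√(fR)`. Since `R` is Noetherian, `R₊ᴺ ⊆ fR` for some `N`,
so in degrees `n ≥ N` every homogeneous element is `f` times a homogeneous element of degree
`n - 1`. As each `Rₙ = R₁ⁿ` is a finitely generated `k`-module, `R` is then a finite module over
`k[f]`, generated by the components of degree `≤ N`. Integral extensions do not raise Krull
dimension and `k[f]` is a quotient of `k[X]`, so `dim R ≤ 1`.
-/

theorem DirectSum.Decomposition.eq_of_le_of_iSup_eq_top {ι k M : Type*} [DecidableEq ι]
    [Semiring k] [AddCommMonoid M] [Module k M] (ℳ : ι → Submodule k M)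
    [DirectSum.Decomposition ℳ] {N : ι → Submodule k M} (hN : ∀ i, N i ≤ ℳ i)
    (htop : ⨆ i, N i = ⊤) (i : ι) : N i = ℳ i := by
  refine le_antisymm (hN i) fun x hx ↦ ?_
  suffices h : ∀ y ∈ ⨆ j, N j, (DirectSum.decompose ℳ y i : M) ∈ N i by
    simpa only [DirectSum.decompose_of_mem_same ℳ hx] using h x (htop ▸ Submodule.mem_top)
  intro y hy
  induction hy using Submodule.iSup_induction' with
  | mem j y hy =>
    obtain rfl | hji := eq_or_ne j i
    · rwa [DirectSum.decompose_of_mem_same ℳ (hN j hy)]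
    · rw [DirectSum.decompose_of_mem_ne ℳ (hN j hy) hji]
      exact zero_mem _
  | zero => simp
  | add y z _ _ hy hz => simpa using add_mem hy hz

theorem Submodule.iSup_pow_eq_top_of_adjoin_eq_top {k A : Type*} [CommSemiring k] [Semiring A]
    [Algebra k A] {M : Submodule k A} (hM : Algebra.adjoin k (M : Set A) = ⊤) :
    ⨆ i : ℕ, M ^ i = ⊤ := by
  rw [eq_top_iff, ← Algebra.top_toSubmodule, ← hM, Algebra.adjoin_toSubmodule_le]
  intro x hx
  suffices h : ∃ i, x ∈ M ^ i from h.elim fun i hi ↦ Submodule.mem_iSup_of_mem i hi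
  induction hx using Submonoid.closure_induction with
  | mem y hy => exact ⟨1, by rwa [pow_one]⟩
  | one => exact ⟨0, by rw [pow_zero]; exact Submodule.one_le.mp le_rfl⟩
  | mul a b _ _ ha hb =>
    obtain ⟨i, hi⟩ := ha
    obtain ⟨j, hj⟩ := hb
    exact ⟨i + j, pow_add M i j ▸ Submodule.mul_mem_mul hi hj⟩

theorem GradedRing.exists_mem_eq_mul_of_mem_span_singleton {ι R σ : Type*} [DecidableEq ι]
    [AddLeftCancelMonoid ι] [CommRing R] [SetLike σ R] [AddSubgroupClass σ R] (𝒜 : ι → σ)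
    [GradedRing 𝒜] {f x : R} {i j : ι} (hf : f ∈ 𝒜 i) (hx : x ∈ 𝒜 (i + j))
    (hxf : x ∈ Ideal.span {f}) : ∃ y ∈ 𝒜 j, x = f * y := by
  obtain ⟨z, rfl⟩ := Ideal.mem_span_singleton'.mp hxf
  refine ⟨DirectSum.decompose 𝒜 z j, SetLike.coe_mem _, ?_⟩
  rw [mul_comm z, ← DirectSum.coe_decompose_mul_add_of_left_mem 𝒜 hf]
  rw [mul_comm] at hx
  exact (DirectSum.decompose_of_mem_same 𝒜 hx).symm

namespace GradedAlgebra

variable {k R : Type*} [CommRing k] [CommRing R] [Algebra k R] {𝒜 : ℕ → Submodule k R}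
  [GradedAlgebra 𝒜]

variable (𝒜) in
theorem pow_degree_one_le (n : ℕ) : 𝒜 1 ^ n ≤ 𝒜 n := by
  induction n with
  | zero => exact Submodule.one_le.mpr (SetLike.one_mem_graded 𝒜)
  | succ n ih =>
    rw [pow_succ]
    exact Submodule.mul_le.mpr fun a ha b hb ↦ SetLike.mul_mem_graded (ih ha) hb

theorem eq_pow_degree_one (hgen : Algebra.adjoin k (𝒜 1 : Set R) = ⊤) (n : ℕ) :
    𝒜 n = 𝒜 1 ^ n :=
  (DirectSum.Decomposition.eq_of_le_of_iSup_eq_top 𝒜 (pow_degree_one_le 𝒜)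
    (Submodule.iSup_pow_eq_top_of_adjoin_eq_top hgen) n).symm

theorem le_span_degree_one_pow (hgen : Algebra.adjoin k (𝒜 1 : Set R) = ⊤) (n : ℕ) :
    𝒜 n ≤ (Ideal.span (𝒜 1 : Set R) ^ n).restrictScalars k := by
  rw [eq_pow_degree_one hgen, Submodule.pow_eq_span_pow_set, Submodule.span_le, Ideal.span,
    Submodule.span_pow]
  exact Submodule.subset_span

theorem fg_degree_one [IsNoetherianRing R] (hgen : Algebra.adjoin k (𝒜 1 : Set R) = ⊤) :
    (𝒜 1).FG := by
  obtain ⟨s, hs𝒜, hs⟩ := (Submodule.fg_span_iff_fg_span_finset_subset (R := R)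
    (𝒜 1 : Set R)).mp (IsNoetherian.noetherian _)
  refine ⟨s, le_antisymm (Submodule.span_le.mpr hs𝒜) fun x hx ↦ ?_⟩
  obtain ⟨c, -, rfl⟩ := Submodule.mem_span_finset.mp (hs ▸ Submodule.subset_span hx :
    x ∈ Submodule.span R (s : Set R))
  rw [← DirectSum.decompose_of_mem_same 𝒜 hx, DirectSum.decompose_sum, DFinsupp.finsetSum_apply,
    Submodule.coe_sum]
  refine Submodule.sum_mem _ fun i hi ↦ ?_
  have h0 : (DirectSum.decompose 𝒜 (c i) 0 : R) ∈ (1 : Submodule k R) := by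
    simpa only [eq_pow_degree_one hgen 0, pow_zero] using
      SetLike.coe_mem (DirectSum.decompose 𝒜 (c i) 0)
  rw [smul_eq_mul, ← zero_add 1, DirectSum.coe_decompose_mul_add_of_right_mem 𝒜 (hs𝒜 hi),
    ← one_mul (Submodule.span k (s : Set R))]
  exact Submodule.mul_mem_mul h0 (Submodule.subset_span hi)

theorem fg_of_adjoin_eq_top [IsNoetherianRing R] (hgen : Algebra.adjoin k (𝒜 1 : Set R) = ⊤)
    (n : ℕ) : (𝒜 n).FG :=
  eq_pow_degree_one hgen n ▸ (fg_degree_one hgen).pow n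

theorem finite_adjoin_of_forall_mem_radical [IsNoetherianRing R]
    (hgen : Algebra.adjoin k (𝒜 1 : Set R) = ⊤) {f : R} (hf : f ∈ 𝒜 1)
    (hrad : ∀ g ∈ 𝒜 1, g ∈ (Ideal.span {f}).radical) :
    Module.Finite (Algebra.adjoin k {f}) R := by
  obtain ⟨N, hN⟩ := Ideal.exists_pow_le_of_le_radical_of_fg (Ideal.span_le.mpr hrad)
    (IsNoetherian.noetherian _)
  obtain ⟨t, ht⟩ :=
    Submodule.fg_biSup (Finset.range (N + 1)) 𝒜 fun n _ ↦ fg_of_adjoin_eq_top hgen n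
  set B := Submodule.span (Algebra.adjoin k {f}) (t : Set R)
  have hlow : ∀ n ≤ N, 𝒜 n ≤ B.restrictScalars k := fun n hn ↦
    calc 𝒜 n ≤ ⨆ i ∈ Finset.range (N + 1), 𝒜 i :=
          le_biSup 𝒜 (Finset.mem_range.mpr (Nat.lt_succ_of_le hn))
      _ = Submodule.span k t := ht.symm
      _ ≤ B.restrictScalars k := Submodule.span_le_restrictScalars k _ _
  have hdeg : ∀ n, 𝒜 n ≤ B.restrictScalars k := by
    intro n
    induction n with
    | zero => exact hlow 0 N.zero_le
    | succ n ih =>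
      rcases le_or_gt (n + 1) N with hn | hn
      · exact hlow (n + 1) hn
      intro x hx
      have hxf : x ∈ Ideal.span {f} :=
        hN (Ideal.pow_le_pow_right hn.le (le_span_degree_one_pow hgen (n + 1) hx))
      obtain ⟨y, hy, rfl⟩ :=
        GradedRing.exists_mem_eq_mul_of_mem_span_singleton 𝒜 hf (add_comm n 1 ▸ hx) hxf
      exact B.smul_mem ⟨f, Algebra.self_mem_adjoin_singleton k f⟩ (ih hy)
  refine ⟨t, eq_top_iff.mpr fun x _ ↦ ?_⟩
  have hx : x ∈ ⨆ n, 𝒜 n :=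
    (DirectSum.Decomposition.isInternal 𝒜).submodule_iSup_eq_top ▸ Submodule.mem_top
  exact iSup_le hdeg hx

end GradedAlgebra

theorem ringKrullDim_le_of_isIntegral (A R : Type*) [CommRing A] [CommRing R] [Algebra A R]
    [Algebra.IsIntegral A R] : ringKrullDim R ≤ ringKrullDim A :=
  Order.krullDim_le_of_strictMono
    (fun P : PrimeSpectrum R ↦ ⟨P.asIdeal.comap (algebraMap A R), inferInstance⟩)
    fun P Q hPQ ↦ by
      rw [← PrimeSpectrum.asIdeal_lt_asIdeal] at hPQ
      obtain ⟨x, hxQ, hxP⟩ := SetLike.exists_of_lt hPQ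
      exact Ideal.comap_lt_comap_of_integral_mem_sdiff hPQ.le ⟨hxQ, hxP⟩
        (Algebra.IsIntegral.isIntegral x)

theorem ringKrullDim_adjoin_singleton_le_one (k : Type*) {A : Type*} [Field k] [CommRing A]
    [Algebra k A] (x : A) : ringKrullDim (Algebra.adjoin k {x}) ≤ 1 := by
  have hk : ringKrullDim (Polynomial k) = 1 := by
    rw [Polynomial.ringKrullDim_of_isNoetherianRing, ringKrullDim_eq_zero_of_field, zero_add]
  rw [← hk]
  exact ringKrullDim_le_of_surjective
    ((Polynomial.aeval x).codRestrict _ fun _ ↦ Polynomial.aeval_mem_adjoin_singleton k x).toRingHom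
    fun a ↦ (Algebra.adjoin_eq_exists_aeval k x a).imp fun _ hp ↦ Subtype.ext hp

theorem stmt_11_general (k R : Type*) [Field k] [CommRing R] [IsNoetherianRing R]
    [Algebra k R] (𝒜 : ℕ → Submodule k R) [GradedAlgebra 𝒜]
    (hgen : Algebra.adjoin k (𝒜 1 : Set R) = ⊤)
    (hdim : 2 ≤ ringKrullDim R)
    (f : R) (hf : f ∈ 𝒜 1) :
    ∃ g ∈ 𝒜 1, g ∉ (Ideal.span {f}).radical := by
  by_contra! hrad
  have := GradedAlgebra.finite_adjoin_of_forall_mem_radical hgen hf hrad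
  have hdim_le : ringKrullDim R ≤ 1 :=
    (ringKrullDim_le_of_isIntegral (Algebra.adjoin k {f}) R).trans
      (ringKrullDim_adjoin_singleton_le_one k f)
  exact absurd (hdim.trans hdim_le) (by norm_num)

theorem stmt_11 (k R : Type*) [Field k] [CommRing R] [IsNoetherianRing R]
    [Algebra k R] (𝒜 : ℕ → Submodule k R) [GradedAlgebra 𝒜]
    (hgen : Algebra.adjoin k (𝒜 1 : Set R) = ⊤)
    (hdim : 2 ≤ ringKrullDim R)
    (f : R) (hf : f ∈ 𝒜 1) (hf0 : f ≠ 0) :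
    ∃ g ∈ 𝒜 1, g ∉ (Ideal.span {f}).radical :=
  stmt_11_general k R 𝒜 hgen hdim f hf
end

section
/- Let R be an ℕ-graded commutative ring, f ∈ R₁ and g ∈ R₁. If there exist n ≥ 1 and h ∈ Rₙ such that (f/g)(h/gⁿ) = 1 in the localization R_g (in degree-zero part), then g lies in the radical of the ideal fR. -/
theorem stmt_12 (R : Type*) [CommRing R] (𝒜 : ℕ → AddSubgroup R) [GradedRing 𝒜]
    (f g h : R) (hf : f ∈ 𝒜 1) (hg : g ∈ 𝒜 1) (n : ℕ) (hn : 1 ≤ n)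
    (hh : h ∈ 𝒜 n)
    (heq : IsLocalization.mk' (Localization.Away g) f ⟨g, Submonoid.mem_powers g⟩ *
        IsLocalization.mk' (Localization.Away g) h ⟨g ^ n, pow_mem (Submonoid.mem_powers g) n⟩ = 1) :
    g ∈ (Ideal.span {f}).radical := by
  rw [← IsLocalization.mk'_mul] at heq
  rw [IsLocalization.mk'_eq_iff_eq_mul, one_mul] at heq
  obtain ⟨⟨c, k, rfl⟩, hc⟩ := (IsLocalization.eq_iff_exists (Submonoid.powers g) _).mp heq
  simp only [Submonoid.mk_mul_mk] at hc
  refine ⟨n + 1 + k, Ideal.mem_span_singleton.mpr ⟨h * g ^ k, ?_⟩⟩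
  rw [pow_add, pow_add]
  linear_combination -hc
end
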